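/- For every w ∈ C_c^∞(ℝ × ℝⁿ) and ν ∈ ℝⁿ \ {0}, ‖e^{−φ}(i∂_t + Δ)(e^φ w)‖²_{L²(ℝ×ℝⁿ)} = ‖(i∂_t + Δ)w‖²_{L²} + 4‖ν·∇w‖²_{L²}, where φ(t,x) = i|ν|²t + ν·x. -/

import Mathlib

open MeasureTheory Complex ComplexConjugate
open scoped RealInnerProductSpace

noncomputable section

/-- Spatial Laplacian of a complex-valued function on Euclidean space. -/
def spatialLap {n : ℕ} (f : EuclideanSpace ℝ (Fin n) → ℂ) (x : EuclideanSpace ℝ (Fin n)) : ℂ :=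
  ∑ i : Fin n,
    fderiv ℝ (fun y => fderiv ℝ f y (EuclideanSpace.single i (1 : ℝ))) x
      (EuclideanSpace.single i (1 : ℝ))

/-- The Schrödinger operator `i ∂ₜ + Δ`. -/
def schrodOp {n : ℕ} (u : ℝ × EuclideanSpace ℝ (Fin n) → ℂ)
    (p : ℝ × EuclideanSpace ℝ (Fin n)) : ℂ :=
  Complex.I * deriv (fun s => u (s, p.2)) p.1 + spatialLap (fun x => u (p.1, x)) p.2

/-- The linear phase `φ(t,x) = i|ν|²t + ν·x`. -/
def phase {n : ℕ} (ν : EuclideanSpace ℝ (Fin n)) (p : ℝ × EuclideanSpace ℝ (Fin n)) : ℂ :=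
  Complex.I * ((‖ν‖ ^ 2 : ℝ) : ℂ) * (p.1 : ℂ) + ((⟪ν, p.2⟫ : ℝ) : ℂ)

namespace S5
variable {n : ℕ}

abbrev EN (n : ℕ) := ℝ × EuclideanSpace ℝ (Fin n)

/-- Directional derivative. -/
def Dd (v : EN n) (f : EN n → ℂ) : EN n → ℂ := fun p => fderiv ℝ f p v

lemma two_le_top : (2 : WithTop ℕ∞) ≤ ((⊤:ℕ∞) : WithTop ℕ∞) :=
  (by exact_mod_cast rfl : ((2:ℕ) : WithTop ℕ∞) = 2) ▸ ENat.natCast_le_of_coe_top_le_withTop le_rfl 2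

lemma one_le_top : (1 : WithTop ℕ∞) ≤ ((⊤:ℕ∞) : WithTop ℕ∞) :=
  (by exact_mod_cast rfl : ((1:ℕ) : WithTop ℕ∞) = 1) ▸ ENat.natCast_le_of_coe_top_le_withTop le_rfl 1

lemma Dd.fderivContDiff {f : EN n → ℂ} (hf : ContDiff ℝ (⊤:ℕ∞) f) :
    ContDiff ℝ (⊤:ℕ∞) (fderiv ℝ f) := hf.fderiv_right (by simp)

lemma Dd.diff {f : EN n → ℂ} (hf : ContDiff ℝ (⊤:ℕ∞) f) : Differentiable ℝ f :=
  hf.differentiable (by simp)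

lemma Dd.contDiff {f : EN n → ℂ} (hf : ContDiff ℝ (⊤:ℕ∞) f) (v : EN n) :
    ContDiff ℝ (⊤:ℕ∞) (Dd v f) :=
  (hf.fderiv_right (by simp)).clm_apply contDiff_const

lemma Dd.support {f : EN n → ℂ} (hs : HasCompactSupport f) (v : EN n) :
    HasCompactSupport (Dd v f) :=
  (hs.fderiv ℝ).comp_left (g := fun L : EN n →L[ℝ] ℂ => L v) rfl

lemma Dd.conj {f : EN n → ℂ} (hf : Differentiable ℝ f) (v : EN n) :
    Dd v (fun p => conj (f p)) = fun p => conj (Dd v f p) := by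
  funext p
  have h := ((Complex.conjCLE : ℂ ≃L[ℝ] ℂ).toContinuousLinearMap.hasFDerivAt.comp p
    (hf p).hasFDerivAt).fderiv
  simp only [Function.comp_def] at h
  show fderiv ℝ (fun q => Complex.conjCLE.toContinuousLinearMap (f q)) p v = _
  rw [h]; rfl

lemma Dd.comm {f : EN n → ℂ} (hf : ContDiff ℝ (⊤:ℕ∞) f) (u v : EN n) :
    Dd u (Dd v f) = Dd v (Dd u f) := by
  funext p
  have hd : Differentiable ℝ (fderiv ℝ f) := (Dd.fderivContDiff hf).differentiable (by simp)
  have key : ∀ a : EN n, Dd u (Dd a f) p = fderiv ℝ (fderiv ℝ f) p u a := by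
    intro a
    have h := (((ContinuousLinearMap.apply ℝ ℂ a).hasFDerivAt.comp p
      (hd p).hasFDerivAt)).fderiv
    simp only [Function.comp_def] at h
    show fderiv ℝ (fun q => (ContinuousLinearMap.apply ℝ ℂ a) (fderiv ℝ f q)) p u = _
    rw [h]; rfl
  have key2 : ∀ a : EN n, Dd v (Dd a f) p = fderiv ℝ (fderiv ℝ f) p v a := by
    intro a
    have h := (((ContinuousLinearMap.apply ℝ ℂ a).hasFDerivAt.comp p
      (hd p).hasFDerivAt)).fderiv
    simp only [Function.comp_def] at h
    show fderiv ℝ (fun q => (ContinuousLinearMap.apply ℝ ℂ a) (fderiv ℝ f q)) p v = _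
    rw [h]; rfl
  rw [key v, key2 u]
  exact (hf.contDiffAt.isSymmSndFDerivAt (by rw [minSmoothness_of_isRCLikeNormedField]; exact two_le_top)).eq u v

lemma fderiv_slice {f : EN n → ℂ} (hf : Differentiable ℝ f) (t : ℝ)
    (x : EuclideanSpace ℝ (Fin n)) (v : EuclideanSpace ℝ (Fin n)) :
    fderiv ℝ (fun y => f (t, y)) x v = fderiv ℝ f (t, x) (0, v) := by
  have h1 : HasFDerivAt (fun y : EuclideanSpace ℝ (Fin n) => (t, y))
      ((0 : EuclideanSpace ℝ (Fin n) →L[ℝ] ℝ).prod (ContinuousLinearMap.id ℝ _)) x :=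
    HasFDerivAt.prodMk (hasFDerivAt_const t x) (hasFDerivAt_id x)
  have h := ((hf (t, x)).hasFDerivAt.comp x h1).fderiv
  simp only [Function.comp_def] at h
  rw [h]; simp

lemma deriv_slice {f : EN n → ℂ} (hf : Differentiable ℝ f) (t : ℝ)
    (x : EuclideanSpace ℝ (Fin n)) :
    deriv (fun s => f (s, x)) t = fderiv ℝ f (t, x) (1, 0) := by
  have h1 : HasFDerivAt (fun s : ℝ => (s, x))
      ((ContinuousLinearMap.id ℝ ℝ).prod (0 : ℝ →L[ℝ] EuclideanSpace ℝ (Fin n))) t :=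
    HasFDerivAt.prodMk (hasFDerivAt_id t) (hasFDerivAt_const x t)
  have h := ((hf (t, x)).hasFDerivAt.comp t h1).hasDerivAt.deriv
  simp only [Function.comp_def] at h
  rw [h]; simp


def eI (i : Fin n) : EN n := (0, EuclideanSpace.single i 1)

def eT : EN n := (1, 0)

/-- Spatial Laplacian in terms of full-space directional derivatives. -/
lemma spatialLap_eq {f : EN n → ℂ} (hf : ContDiff ℝ (⊤:ℕ∞) f) (t : ℝ)
    (x : EuclideanSpace ℝ (Fin n)) :
    (∑ i : Fin n,
      fderiv ℝ (fun y => fderiv ℝ (fun y' => f (t, y')) y (EuclideanSpace.single i (1 : ℝ))) x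
        (EuclideanSpace.single i (1 : ℝ)))
    = ∑ i : Fin n, Dd (eI i) (Dd (eI i) f) (t, x) := by
  apply Finset.sum_congr rfl
  intro i _
  have hinner : (fun y => fderiv ℝ (fun y' => f (t, y')) y (EuclideanSpace.single i (1 : ℝ)))
      = fun y => Dd (eI i) f (t, y) := by
    funext y
    exact fderiv_slice (Dd.diff hf) t y _
  rw [hinner, fderiv_slice (Dd.diff (Dd.contDiff hf (eI i))) t x]
  rfl

/-- The phase as a continuous linear map. -/
def phaseCLM (ν : EuclideanSpace ℝ (Fin n)) : EN n →L[ℝ] ℂ :=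
  (Complex.I * ((‖ν‖ ^ 2 : ℝ) : ℂ)) • (Complex.ofRealCLM.comp (ContinuousLinearMap.fst ℝ ℝ _))
  + Complex.ofRealCLM.comp ((innerSL ℝ ν).comp (ContinuousLinearMap.snd ℝ ℝ _))

lemma phase_eq (ν : EuclideanSpace ℝ (Fin n)) : phase ν = ⇑(phaseCLM ν) := by
  funext p
  simp [phase, phaseCLM, smul_eq_mul]

lemma phaseCLM_eT (ν : EuclideanSpace ℝ (Fin n)) :
    phaseCLM ν (eT : EN n) = Complex.I * ((‖ν‖ ^ 2 : ℝ) : ℂ) := by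
  simp [phaseCLM, eT, smul_eq_mul]

lemma phaseCLM_eI (ν : EuclideanSpace ℝ (Fin n)) (i : Fin n) :
    phaseCLM ν (eI i) = ((ν i : ℝ) : ℂ) := by
  simp [phaseCLM, eI, smul_eq_mul, EuclideanSpace.inner_single_right]

lemma hasFDerivAt_expPhase (ν : EuclideanSpace ℝ (Fin n)) (p : EN n) :
    HasFDerivAt (fun q => Complex.exp (phase ν q))
      (Complex.exp (phase ν p) • phaseCLM ν) p := by
  have h1 : HasFDerivAt (phase ν) (phaseCLM ν) p := by
    rw [phase_eq]; exact (phaseCLM ν).hasFDerivAt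
  exact (Complex.hasDerivAt_exp (phase ν p)).comp_hasFDerivAt p h1

lemma contDiff_expPhase (ν : EuclideanSpace ℝ (Fin n)) :
    ContDiff ℝ (⊤:ℕ∞) (fun q => Complex.exp (phase ν q)) := by
  have : (fun q => Complex.exp (phase ν q)) = Complex.exp ∘ ⇑(phaseCLM ν) := by
    rw [phase_eq]; rfl
  rw [this]
  exact ((Complex.contDiff_exp (𝕜 := ℂ)).restrict_scalars ℝ).comp (phaseCLM ν).contDiff

/-- Product rule: directional derivative of `e^φ · u`. -/
lemma Dd_expPhase_mul {u : EN n → ℂ} (hu : ContDiff ℝ (⊤:ℕ∞) u)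
    (ν : EuclideanSpace ℝ (Fin n)) (v : EN n) (p : EN n) :
    Dd v (fun q => Complex.exp (phase ν q) * u q) p
      = Complex.exp (phase ν p) * (phaseCLM ν v * u p + Dd v u p) := by
  show fderiv ℝ (fun q => Complex.exp (phase ν q) * u q) p v = _
  rw [fderiv_fun_mul ((hasFDerivAt_expPhase ν p).differentiableAt) (Dd.diff hu p)]
  rw [(hasFDerivAt_expPhase ν p).fderiv]
  simp only [ContinuousLinearMap.add_apply, ContinuousLinearMap.smul_apply, smul_eq_mul]
  show Complex.exp (phase ν p) * fderiv ℝ u p v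
      + u p * (Complex.exp (phase ν p) * phaseCLM ν v) = _
  unfold Dd
  ring

lemma schrodOp_eq {f : EN n → ℂ} (hf : ContDiff ℝ (⊤:ℕ∞) f) (p : EN n) :
    schrodOp f p = Complex.I * Dd eT f p + ∑ i : Fin n, Dd (eI i) (Dd (eI i) f) p := by
  unfold schrodOp spatialLap
  rw [deriv_slice (Dd.diff hf) p.1 p.2]
  rw [spatialLap_eq hf p.1 p.2]
  rfl

lemma Dd_const_mul_add {w u : EN n → ℂ} (hw : ContDiff ℝ (⊤:ℕ∞) w)
    (hu : ContDiff ℝ (⊤:ℕ∞) u) (c : ℂ) (v : EN n) (p : EN n) :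
    Dd v (fun q => c * w q + u q) p = c * Dd v w p + Dd v u p := by
  unfold Dd
  rw [fderiv_fun_add ((Dd.diff hw p).const_mul c) (Dd.diff hu p),
    fderiv_const_mul (Dd.diff hw p)]
  simp

lemma sum_smul_eI (ν : EuclideanSpace ℝ (Fin n)) :
    ∑ i : Fin n, ν i • (eI i : EN n) = ((0 : ℝ), ν) := by
  have h2 := (EuclideanSpace.basisFun (Fin n) ℝ).sum_repr ν
  refine Prod.ext ?_ ?_
  · rw [Prod.fst_sum]; simp [eI]
  · rw [Prod.snd_sum]
    simpa [eI, EuclideanSpace.basisFun_apply, EuclideanSpace.basisFun_repr] using h2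

lemma Dd_nu {w : EN n → ℂ} (hw : Differentiable ℝ w) (ν : EuclideanSpace ℝ (Fin n)) (p : EN n) :
    Dd ((0 : ℝ), ν) w p = ∑ i : Fin n, ((ν i : ℝ) : ℂ) * Dd (eI i) w p := by
  unfold Dd
  rw [← sum_smul_eI ν, map_sum]
  refine Finset.sum_congr rfl fun i _ => ?_
  rw [ContinuousLinearMap.map_smul, Complex.real_smul]

lemma sum_sq_nu (ν : EuclideanSpace ℝ (Fin n)) :
    ∑ i : Fin n, ((ν i : ℝ) : ℂ) * ((ν i : ℝ) : ℂ) = ((‖ν‖ ^ 2 : ℝ) : ℂ) := by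
  have h : (‖ν‖ ^ 2 : ℝ) = ∑ i : Fin n, ν i * ν i := by
    rw [EuclideanSpace.real_norm_sq_eq]
    simp [sq]
  rw [h]
  push_cast
  rfl

/-- The key pointwise conjugation identity. -/
lemma key_pointwise (ν : EuclideanSpace ℝ (Fin n)) {w : EN n → ℂ}
    (hw : ContDiff ℝ (⊤:ℕ∞) w) (p : EN n) :
    Complex.exp (-(phase ν p)) * schrodOp (fun q => Complex.exp (phase ν q) * w q) p
      = schrodOp w p + 2 * Dd ((0 : ℝ), ν) w p := by
  have hg : ContDiff ℝ (⊤:ℕ∞) (fun q => Complex.exp (phase ν q) * w q) :=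
    (contDiff_expPhase ν).mul hw
  rw [schrodOp_eq hg, schrodOp_eq hw]
  have hT : Dd eT (fun q => Complex.exp (phase ν q) * w q) p
      = Complex.exp (phase ν p) * (Complex.I * ((‖ν‖ ^ 2 : ℝ) : ℂ) * w p + Dd eT w p) := by
    rw [Dd_expPhase_mul hw ν eT p, phaseCLM_eT]
  have hIi : ∀ i : Fin n, Dd (eI i) (Dd (eI i) (fun q => Complex.exp (phase ν q) * w q)) p
      = Complex.exp (phase ν p) * (((ν i : ℝ) : ℂ) * ((ν i : ℝ) : ℂ) * w p
        + 2 * ((ν i : ℝ) : ℂ) * Dd (eI i) w p + Dd (eI i) (Dd (eI i) w) p) := by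
    intro i
    have h1 : Dd (eI i) (fun q => Complex.exp (phase ν q) * w q)
        = fun q => Complex.exp (phase ν q) * (((ν i : ℝ) : ℂ) * w q + Dd (eI i) w q) := by
      funext q
      rw [Dd_expPhase_mul hw ν (eI i) q, phaseCLM_eI]
    rw [h1]
    have hu : ContDiff ℝ (⊤:ℕ∞) (fun q => ((ν i : ℝ) : ℂ) * w q + Dd (eI i) w q) :=
      (contDiff_const.mul hw).add (Dd.contDiff hw _)
    rw [Dd_expPhase_mul hu ν (eI i) p, phaseCLM_eI,
      Dd_const_mul_add hw (Dd.contDiff hw _) _ (eI i) p]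
    ring
  rw [hT, Finset.sum_congr rfl (fun i _ => hIi i), ← Finset.mul_sum]
  have hexp : Complex.exp (-(phase ν p)) * Complex.exp (phase ν p) = 1 := by
    rw [← Complex.exp_add]; simp
  have hsum : ∑ i : Fin n, (((ν i : ℝ) : ℂ) * ((ν i : ℝ) : ℂ) * w p
      + 2 * ((ν i : ℝ) : ℂ) * Dd (eI i) w p + Dd (eI i) (Dd (eI i) w) p)
      = ((‖ν‖ ^ 2 : ℝ) : ℂ) * w p + 2 * Dd ((0 : ℝ), ν) w p
        + ∑ i : Fin n, Dd (eI i) (Dd (eI i) w) p := by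
    rw [Finset.sum_add_distrib, Finset.sum_add_distrib, ← Finset.sum_mul, sum_sq_nu,
      Dd_nu (Dd.diff hw) ν p]
    have h3 : ∑ i : Fin n, 2 * ((ν i : ℝ) : ℂ) * Dd (eI i) w p
        = 2 * ∑ i : Fin n, ((ν i : ℝ) : ℂ) * Dd (eI i) w p := by
      rw [Finset.mul_sum]
      exact Finset.sum_congr rfl fun i _ => by ring
    rw [h3]
  rw [hsum]
  have : Complex.exp (-(phase ν p)) * (Complex.I * (Complex.exp (phase ν p)
      * (Complex.I * ((‖ν‖ ^ 2 : ℝ) : ℂ) * w p + Dd eT w p))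
      + Complex.exp (phase ν p) * (((‖ν‖ ^ 2 : ℝ) : ℂ) * w p + 2 * Dd ((0 : ℝ), ν) w p
        + ∑ i : Fin n, Dd (eI i) (Dd (eI i) w) p))
      = (Complex.exp (-(phase ν p)) * Complex.exp (phase ν p))
        * (Complex.I * Dd eT w p + ∑ i : Fin n, Dd (eI i) (Dd (eI i) w) p
          + 2 * Dd ((0 : ℝ), ν) w p
          + (Complex.I * Complex.I + 1) * ((‖ν‖ ^ 2 : ℝ) : ℂ) * w p) := by ring
  rw [this, hexp, Complex.I_mul_I]
  ring

lemma norm_expand (a b : ℂ) :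
    ‖a + 2*b‖^2 = ‖a‖^2 + 4*‖b‖^2 + 4*(a * conj b).re := by
  simp only [Complex.sq_norm, Complex.normSq_add, Complex.normSq_mul, map_mul]
  have h2 : Complex.normSq 2 = 4 := by norm_num [Complex.normSq_apply]
  have h3 : (a * ((starRingEnd ℂ) 2 * (starRingEnd ℂ) b)).re = 2 * (a * (starRingEnd ℂ) b).re := by
    have hc : (starRingEnd ℂ) (2:ℂ) = 2 := by norm_num [Complex.ext_iff]
    rw [hc, show a * (2 * (starRingEnd ℂ) b) = 2 * (a * (starRingEnd ℂ) b) by ring]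
    simp [Complex.mul_re]
  rw [h2, h3]; ring

lemma contDiff_conj {f : EN n → ℂ} (hf : ContDiff ℝ (⊤:ℕ∞) f) :
    ContDiff ℝ (⊤:ℕ∞) (fun p => conj (f p)) :=
  (ContinuousLinearMap.contDiff (Complex.conjCLE : ℂ ≃L[ℝ] ℂ).toContinuousLinearMap).comp hf

lemma support_conj {f : EN n → ℂ} (hs : HasCompactSupport f) :
    HasCompactSupport (fun p => conj (f p)) :=
  hs.comp_left (g := ⇑(starRingEnd ℂ)) (map_zero _)

instance : (volume : Measure (EN n)).IsAddHaarMeasure := by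
  have : (volume : Measure (EN n))
      = (volume : Measure ℝ).prod (volume : Measure (EuclideanSpace ℝ (Fin n))) := rfl
  rw [this]
  exact MeasureTheory.Measure.prod.instIsAddHaarMeasure _ _

lemma Dd.tsupport_subset {f : EN n → ℂ} (v : EN n) :
    tsupport (Dd v f) ⊆ tsupport f := by
  refine closure_minimal (fun p hp => ?_) (isClosed_tsupport f)
  refine support_fderiv_subset ℝ (f := f) (fun h0 => hp ?_)
  simp [Dd, h0]

lemma intCC {f g : EN n → ℂ} (hf : Continuous f) (hg : Continuous g)
    (hs : HasCompactSupport f) : Integrable (fun p => f p * g p) :=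
  (hf.mul hg).integrable_of_hasCompactSupport hs.mul_right

/-- The integral of a directional derivative of a smooth compactly supported function is zero. -/
lemma integral_Dd_zero {f : EN n → ℂ} (hf : ContDiff ℝ (⊤:ℕ∞) f)
    (hs : HasCompactSupport f) (v : EN n) : ∫ p, Dd v f p = 0 := by
  have h := integral_mul_fderiv_eq_neg_fderiv_mul_of_integrable (μ := volume)
    (f := fun _ : EN n => (1:ℂ)) (g := f) (v := v)
    (by simpa [fderiv_fun_const] using (integrable_zero (EN n) ℂ volume))
    (by simp only [one_mul]; exact ((Dd.contDiff hf v).continuous.integrable_of_hasCompactSupport (μ := volume)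
      (Dd.support hs v)))
    (by simpa using hf.continuous.integrable_of_hasCompactSupport hs)
    (fun x _ => differentiableAt_const 1) (fun x _ => Dd.diff hf x)
  simp [fderiv_fun_const] at h; exact h

/-- Integration by parts. -/
lemma ibp {f g : EN n → ℂ} (hf : ContDiff ℝ (⊤:ℕ∞) f) (hg : ContDiff ℝ (⊤:ℕ∞) g)
    (hsf : HasCompactSupport f) (v : EN n) :
    ∫ p, f p * Dd v g p = -∫ p, Dd v f p * g p :=
  integral_mul_fderiv_eq_neg_fderiv_mul_of_integrable
    (intCC (Dd.contDiff hf v).continuous hg.continuous (Dd.support hsf v))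
    (intCC hf.continuous (Dd.contDiff hg v).continuous hsf)
    (intCC hf.continuous hg.continuous hsf)
    (fun x _ => Dd.diff hf x) (fun x _ => Dd.diff hg x)

lemma Dd_mul_conj {b : EN n → ℂ} (hb : ContDiff ℝ (⊤:ℕ∞) b) (v : EN n) (p : EN n) :
    Dd v (fun q => b q * conj (b q)) p
      = Dd v b p * conj (b p) + b p * conj (Dd v b p) := by
  show fderiv ℝ (fun q => b q * conj (b q)) p v = _
  rw [fderiv_fun_mul (Dd.diff hb p) (Dd.diff (contDiff_conj hb) p)]
  simp only [ContinuousLinearMap.add_apply, ContinuousLinearMap.smul_apply, smul_eq_mul]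
  have hc : fderiv ℝ (fun q => conj (b q)) p v = conj (fderiv ℝ b p v) :=
    congrFun (Dd.conj (Dd.diff hb) v) p
  rw [hc]
  unfold Dd
  ring

section cross
variable {w : EN n → ℂ} (ν : EuclideanSpace ℝ (Fin n))
  (hw : ContDiff ℝ (⊤:ℕ∞) w) (hs : HasCompactSupport w)
include hw hs

/-- `∫ (∂ₜw) conj(∂_ν w) = ∫ conj(∂ₜw) (∂_ν w)`. -/
lemma crossT :
    ∫ p, Dd eT w p * conj (Dd ((0:ℝ), ν) w p)
      = ∫ p, conj (Dd eT w p) * Dd ((0:ℝ), ν) w p := by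
  have hB : ContDiff ℝ (⊤:ℕ∞) (Dd ((0:ℝ), ν) w) := Dd.contDiff hw _
  have hsB : HasCompactSupport (Dd ((0:ℝ), ν) w) := Dd.support hs _
  have hT : ContDiff ℝ (⊤:ℕ∞) (Dd eT w) := Dd.contDiff hw _
  have hsT : HasCompactSupport (Dd eT w) := Dd.support hs _
  have step1 : ∫ p, conj (Dd ((0:ℝ), ν) w p) * Dd eT w p
      = -∫ p, conj (Dd ((0:ℝ), ν) (Dd eT w) p) * w p := by
    rw [ibp (contDiff_conj hB) hw (support_conj hsB) eT]
    congr 1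
    refine integral_congr_ae (Filter.Eventually.of_forall fun p => ?_)
    beta_reduce
    rw [congrFun (Dd.conj (Dd.diff hB) eT) p,
      congrFun (Dd.comm hw eT ((0:ℝ), ν)) p]
  have step2 : ∫ p, conj (Dd eT w p) * Dd ((0:ℝ), ν) w p
      = -∫ p, conj (Dd ((0:ℝ), ν) (Dd eT w) p) * w p := by
    rw [ibp (contDiff_conj hT) hw (support_conj hsT) ((0:ℝ), ν)]
    congr 1
    refine integral_congr_ae (Filter.Eventually.of_forall fun p => ?_)
    beta_reduce
    rw [congrFun (Dd.conj (Dd.diff hT) ((0:ℝ), ν)) p]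
  have comm : ∫ p, Dd eT w p * conj (Dd ((0:ℝ), ν) w p)
      = ∫ p, conj (Dd ((0:ℝ), ν) w p) * Dd eT w p := by
    refine integral_congr_ae (Filter.Eventually.of_forall fun p => mul_comm _ _)
  rw [comm, step1, ← step2]

/-- The time-derivative part of the cross term vanishes. -/
lemma crossA :
    ∫ p, (Complex.I * Dd eT w p) * conj (Dd ((0:ℝ), ν) w p)
      + conj (Complex.I * Dd eT w p) * Dd ((0:ℝ), ν) w p = 0 := by
  have hB : ContDiff ℝ (⊤:ℕ∞) (Dd ((0:ℝ), ν) w) := Dd.contDiff hw _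
  have hsB : HasCompactSupport (Dd ((0:ℝ), ν) w) := Dd.support hs _
  have hT : ContDiff ℝ (⊤:ℕ∞) (Dd eT w) := Dd.contDiff hw _
  have hsT : HasCompactSupport (Dd eT w) := Dd.support hs _
  have i1 : Integrable (fun p => Complex.I * (Dd eT w p * conj (Dd ((0:ℝ), ν) w p))) :=
    (intCC hT.continuous (contDiff_conj hB).continuous hsT).const_mul _
  have i2 : Integrable (fun p => Complex.I * (conj (Dd eT w p) * Dd ((0:ℝ), ν) w p)) :=
    (intCC (contDiff_conj hT).continuous hB.continuous (support_conj hsT)).const_mul _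
  have hpt : (fun p => (Complex.I * Dd eT w p) * conj (Dd ((0:ℝ), ν) w p)
      + conj (Complex.I * Dd eT w p) * Dd ((0:ℝ), ν) w p)
      = fun p => Complex.I * (Dd eT w p * conj (Dd ((0:ℝ), ν) w p))
        - Complex.I * (conj (Dd eT w p) * Dd ((0:ℝ), ν) w p) := by
    funext p
    simp only [map_mul, Complex.conj_I]
    ring
  rw [hpt, integral_sub i1 i2, integral_const_mul, integral_const_mul, crossT ν hw hs]
  simp

/-- Each spatial second-derivative part of the cross term vanishes. -/
lemma crossB (i : Fin n) :
    ∫ p, Dd (eI i) (Dd (eI i) w) p * conj (Dd ((0:ℝ), ν) w p)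
      + conj (Dd (eI i) (Dd (eI i) w) p) * Dd ((0:ℝ), ν) w p = 0 := by
  set b := Dd (eI i) w with hb_def
  have hb : ContDiff ℝ (⊤:ℕ∞) b := Dd.contDiff hw _
  have hsb : HasCompactSupport b := Dd.support hs _
  have hB : ContDiff ℝ (⊤:ℕ∞) (Dd ((0:ℝ), ν) w) := Dd.contDiff hw _
  have hsB : HasCompactSupport (Dd ((0:ℝ), ν) w) := Dd.support hs _
  set a := Dd ((0:ℝ), ν) b with ha_def
  have ha : ContDiff ℝ (⊤:ℕ∞) a := Dd.contDiff hb _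
  -- first piece
  have c1 : ∫ p, conj (Dd ((0:ℝ), ν) w p) * Dd (eI i) b p
      = -∫ p, conj (a p) * b p := by
    rw [ibp (contDiff_conj hB) hb (support_conj hsB) (eI i)]
    congr 1
    refine integral_congr_ae (Filter.Eventually.of_forall fun p => ?_)
    beta_reduce
    rw [congrFun (Dd.conj (Dd.diff hB) (eI i)) p,
      congrFun (Dd.comm hw (eI i) ((0:ℝ), ν)) p]
  -- second piece
  have c2 : ∫ p, Dd ((0:ℝ), ν) w p * conj (Dd (eI i) b p)
      = -∫ p, a p * conj (b p) := by
    have hconj : (fun p => Dd ((0:ℝ), ν) w p * conj (Dd (eI i) b p))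
        = fun p => Dd ((0:ℝ), ν) w p * Dd (eI i) (fun q => conj (b q)) p := by
      funext p
      rw [congrFun (Dd.conj (Dd.diff hb) (eI i)) p]
    rw [hconj, ibp hB (contDiff_conj hb) hsB (eI i)]
    congr 1
    refine integral_congr_ae (Filter.Eventually.of_forall fun p => ?_)
    beta_reduce
    rw [congrFun (Dd.comm hw (eI i) ((0:ℝ), ν)) p]
  -- combine
  have isplit1 : Integrable (fun p => conj (Dd ((0:ℝ), ν) w p) * Dd (eI i) b p) :=
    intCC (contDiff_conj hB).continuous (Dd.contDiff hb _).continuous (support_conj hsB)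
  have isplit2 : Integrable (fun p => Dd ((0:ℝ), ν) w p * conj (Dd (eI i) b p)) :=
    intCC hB.continuous (contDiff_conj (Dd.contDiff hb _)).continuous hsB
  have hsum : (fun p => Dd (eI i) b p * conj (Dd ((0:ℝ), ν) w p)
      + conj (Dd (eI i) b p) * Dd ((0:ℝ), ν) w p)
      = fun p => (conj (Dd ((0:ℝ), ν) w p) * Dd (eI i) b p)
        + (Dd ((0:ℝ), ν) w p * conj (Dd (eI i) b p)) := by
    funext p; ring
  show ∫ p, Dd (eI i) b p * conj (Dd ((0:ℝ), ν) w p)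
      + conj (Dd (eI i) b p) * Dd ((0:ℝ), ν) w p = 0
  rw [hsum, integral_add isplit1 isplit2, c1, c2]
  have final : ∫ p, conj (a p) * b p + a p * conj (b p) = 0 := by
    have hpt : (fun p => conj (a p) * b p + a p * conj (b p))
        = Dd ((0:ℝ), ν) (fun q => b q * conj (b q)) := by
      funext p
      rw [Dd_mul_conj hb ((0:ℝ), ν) p, ha_def]
      ring
    rw [hpt]
    exact integral_Dd_zero (hb.mul (contDiff_conj hb)) hsb.mul_right _
  have := integral_add (intCC (contDiff_conj ha).continuous hb.continuous
    (support_conj (Dd.support hsb _))) (intCC ha.continuous (contDiff_conj hb).continuous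
    (Dd.support hsb _))
  rw [this] at final
  linear_combination (norm := ring_nf) -final

/-- The full cross term vanishes. -/
lemma cross_zero :
    ∫ p, schrodOp w p * conj (Dd ((0:ℝ), ν) w p)
      + conj (schrodOp w p) * Dd ((0:ℝ), ν) w p = 0 := by
  have hB : ContDiff ℝ (⊤:ℕ∞) (Dd ((0:ℝ), ν) w) := Dd.contDiff hw _
  have hsB : HasCompactSupport (Dd ((0:ℝ), ν) w) := Dd.support hs _
  have hT : ContDiff ℝ (⊤:ℕ∞) (Dd eT w) := Dd.contDiff hw _
  have hsT : HasCompactSupport (Dd eT w) := Dd.support hs _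
  have hpt : (fun p => schrodOp w p * conj (Dd ((0:ℝ), ν) w p)
      + conj (schrodOp w p) * Dd ((0:ℝ), ν) w p)
      = fun p => ((Complex.I * Dd eT w p) * conj (Dd ((0:ℝ), ν) w p)
          + conj (Complex.I * Dd eT w p) * Dd ((0:ℝ), ν) w p)
        + ∑ i : Fin n, (Dd (eI i) (Dd (eI i) w) p * conj (Dd ((0:ℝ), ν) w p)
          + conj (Dd (eI i) (Dd (eI i) w) p) * Dd ((0:ℝ), ν) w p) := by
    funext p
    rw [schrodOp_eq hw p, Finset.sum_add_distrib]
    simp only [map_add, map_sum, add_mul, Finset.sum_mul]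
    ring
  rw [hpt]
  have iA1 : Integrable (fun p => (Complex.I * Dd eT w p) * conj (Dd ((0:ℝ), ν) w p)) :=
    intCC (continuous_const.mul hT.continuous) (contDiff_conj hB).continuous hsT.mul_left
  have iA2 : Integrable (fun p => conj (Complex.I * Dd eT w p) * Dd ((0:ℝ), ν) w p) :=
    intCC (contDiff_conj (contDiff_const.mul hT)).continuous hB.continuous
      (support_conj hsT.mul_left)
  have iT1 : ∀ i : Fin n,
      Integrable (fun p => Dd (eI i) (Dd (eI i) w) p * conj (Dd ((0:ℝ), ν) w p)) := fun i =>
    intCC (Dd.contDiff (Dd.contDiff hw _) _).continuous (contDiff_conj hB).continuous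
      (Dd.support (Dd.support hs _) _)
  have iT2 : ∀ i : Fin n,
      Integrable (fun p => conj (Dd (eI i) (Dd (eI i) w) p) * Dd ((0:ℝ), ν) w p) := fun i =>
    intCC (contDiff_conj (Dd.contDiff (Dd.contDiff hw _) _)).continuous hB.continuous
      (support_conj (Dd.support (Dd.support hs _) _))
  have iTi : ∀ i ∈ Finset.univ, Integrable (fun p =>
      Dd (eI i) (Dd (eI i) w) p * conj (Dd ((0:ℝ), ν) w p)
      + conj (Dd (eI i) (Dd (eI i) w) p) * Dd ((0:ℝ), ν) w p) := fun i _ =>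
    (iT1 i).add (iT2 i)
  have iA : Integrable (fun p => (Complex.I * Dd eT w p) * conj (Dd ((0:ℝ), ν) w p)
      + conj (Complex.I * Dd eT w p) * Dd ((0:ℝ), ν) w p) := iA1.add iA2
  rw [integral_add iA (integrable_finset_sum _ iTi),
    integral_finset_sum _ iTi, crossA ν hw hs]
  rw [Finset.sum_congr rfl (fun i _ => crossB ν hw hs i)]
  simp

end cross
end S5

open S5 in
/-- the Plancherel identity
`‖e^{−φ}(i∂ₜ+Δ)(e^φ w)‖²_{L²} = ‖(i∂ₜ+Δ)w‖²_{L²} + 4‖ν·∇w‖²_{L²}`. -/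
theorem stmt5 (n : ℕ) (ν : EuclideanSpace ℝ (Fin n)) (hν : ν ≠ 0)
    (w : ℝ × EuclideanSpace ℝ (Fin n) → ℂ) (hw : ContDiff ℝ (⊤ : ℕ∞) w)
    (hsupp : HasCompactSupport w) :
    ∫ p : ℝ × EuclideanSpace ℝ (Fin n),
        ‖Complex.exp (-(phase ν p)) * schrodOp (fun q => Complex.exp (phase ν q) * w q) p‖ ^ 2
      = (∫ p : ℝ × EuclideanSpace ℝ (Fin n), ‖schrodOp w p‖ ^ 2)
        + 4 * ∫ p : ℝ × EuclideanSpace ℝ (Fin n), ‖fderiv ℝ (fun x => w (p.1, x)) p.2 ν‖ ^ 2 := by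
  have hw' : ContDiff ℝ (⊤:ℕ∞) w := hw.of_le (by simp)
  have hB : ContDiff ℝ (⊤:ℕ∞) (Dd ((0:ℝ), ν) w) := Dd.contDiff hw' _
  have hsB : HasCompactSupport (Dd ((0:ℝ), ν) w) := Dd.support hsupp _
  have hSrepr : schrodOp w = fun p => Complex.I * Dd eT w p
      + ∑ i : Fin n, Dd (eI i) (Dd (eI i) w) p := funext (schrodOp_eq hw')
  have hScont : Continuous (schrodOp w) := by
    rw [hSrepr]
    exact (continuous_const.mul (Dd.contDiff hw' eT).continuous).add
      (continuous_finset_sum _ fun i _ => (Dd.contDiff (Dd.contDiff hw' _) _).continuous)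
  have hSsupp : HasCompactSupport (schrodOp w) := by
    refine HasCompactSupport.intro hsupp (fun p hp => ?_)
    have h1 : Dd eT w p = 0 :=
      image_eq_zero_of_notMem_tsupport (fun hm => hp (Dd.tsupport_subset eT hm))
    have h2 : ∀ i : Fin n, Dd (eI i) (Dd (eI i) w) p = 0 := fun i =>
      image_eq_zero_of_notMem_tsupport
        (fun hm => hp (Dd.tsupport_subset _ (Dd.tsupport_subset _ hm)))
    rw [hSrepr]
    simp [h1, h2]
  -- rewrite the left-hand side integrand
  have hLHS : (fun p : ℝ × EuclideanSpace ℝ (Fin n) =>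
      ‖Complex.exp (-(phase ν p)) * schrodOp (fun q => Complex.exp (phase ν q) * w q) p‖ ^ 2)
      = fun p => ‖schrodOp w p‖^2
        + (4*‖Dd ((0:ℝ), ν) w p‖^2 + 4*(schrodOp w p * conj (Dd ((0:ℝ), ν) w p)).re) := by
    funext p
    rw [key_pointwise ν hw' p, norm_expand (schrodOp w p) (Dd ((0:ℝ), ν) w p)]
    ring
  -- rewrite the right-hand side integrand
  have hRHS3 : (fun p : ℝ × EuclideanSpace ℝ (Fin n) =>
      ‖fderiv ℝ (fun x => w (p.1, x)) p.2 ν‖ ^ 2) = fun p => ‖Dd ((0:ℝ), ν) w p‖^2 := by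
    funext p
    rw [fderiv_slice (Dd.diff hw') p.1 p.2 ν]
    rfl
  rw [hLHS, hRHS3]
  -- integrability
  have i1 : Integrable (fun p => ‖schrodOp w p‖^2) :=
    (show Continuous (fun p => ‖schrodOp w p‖^2) from hScont.norm.pow 2).integrable_of_hasCompactSupport
      (hSsupp.comp_left (g := fun z : ℂ => ‖z‖^2) (by simp))
  have i2 : Integrable (fun p => ‖Dd ((0:ℝ), ν) w p‖^2) :=
    (show Continuous (fun p => ‖Dd ((0:ℝ), ν) w p‖^2) from hB.continuous.norm.pow 2).integrable_of_hasCompactSupport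
      (hsB.comp_left (g := fun z : ℂ => ‖z‖^2) (by simp))
  have imul : Integrable (fun p => schrodOp w p * conj (Dd ((0:ℝ), ν) w p)) :=
    intCC hScont (contDiff_conj hB).continuous hSsupp
  have i3 : Integrable (fun p => (schrodOp w p * conj (Dd ((0:ℝ), ν) w p)).re) :=
    (Complex.continuous_re.comp (hScont.mul (contDiff_conj hB).continuous)).integrable_of_hasCompactSupport
      ((hSsupp.mul_right).comp_left (g := Complex.re) rfl)
  have hSsm : ContDiff ℝ (⊤:ℕ∞) (schrodOp w) := by
    rw [hSrepr]
    exact (contDiff_const.mul (Dd.contDiff hw' eT)).add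
      (ContDiff.sum fun i _ => Dd.contDiff (Dd.contDiff hw' _) _)
  -- the cross term vanishes
  have hz : ∫ p, (schrodOp w p * conj (Dd ((0:ℝ), ν) w p)).re = 0 := by
    have hre := integral_re imul
    simp only [RCLike.re_to_complex] at hre
    rw [hre]
    have imul2 : Integrable (fun p => conj (schrodOp w p) * Dd ((0:ℝ), ν) w p) :=
      intCC (contDiff_conj hSsm).continuous hB.continuous (support_conj hSsupp)
    have hcz := cross_zero ν hw' hsupp
    rw [integral_add imul imul2] at hcz
    have hconj : ∫ p, conj (schrodOp w p) * Dd ((0:ℝ), ν) w p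
        = conj (∫ p, schrodOp w p * conj (Dd ((0:ℝ), ν) w p)) := by
      rw [← integral_conj]
      refine integral_congr_ae (Filter.Eventually.of_forall fun p => ?_)
      simp [map_mul]
    rw [hconj, Complex.add_conj] at hcz
    have h2 : (2:ℝ) * (∫ p, schrodOp w p * conj (Dd ((0:ℝ), ν) w p)).re = 0 := by
      exact_mod_cast hcz
    linarith
  have i2' : Integrable (fun p => 4*‖Dd ((0:ℝ), ν) w p‖^2) := i2.const_mul 4
  have i3' : Integrable (fun p => 4*(schrodOp w p * conj (Dd ((0:ℝ), ν) w p)).re) :=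
    i3.const_mul 4
  have iR : Integrable (fun p => 4*‖Dd ((0:ℝ), ν) w p‖^2
      + 4*(schrodOp w p * conj (Dd ((0:ℝ), ν) w p)).re) := i2'.add i3'
  rw [integral_add i1 iR, integral_add i2' i3', integral_const_mul, integral_const_mul, hz]
  ring

end
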